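/- Let (Σ,P) be a Kelvin–Planck theory with hotness levels H, and let T be a Clausius–Duhem temperature scale on Σ. The following are equivalent: (i) every Clausius–Duhem temperature scale on Σ is a positive multiple of T; (ii) for every q ∈ M(Σ) with ∫_Σ (1/T) dq = 0, the element (0,q) is a member of \hat{P}; (iii) for each pair of hotness levels h', h ∈ H there is a Carnot element of (Σ,P) operating between h' and h; (iv) for each pair of states σ', σ ∈ Σ there is a Carnot element of (Σ,P) of the form (0, c'δ_{σ'} − cδ_σ) with c', c > 0 and c'/c = T(σ')/T(σ). -/

import Mathlib

/-!
(i) ⇒ (ii): if `(0, q) ∉ \hat P` although `q (1/T) = 0`, a weak-star continuous functional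
`p ↦ p.1 g + p.2 k` separates `(0, q)` from the closed convex cone `\hat P`, with `q k < 0`.
Tilting `1/T` to `1/T - ε k` and `η` to `η + ε g` yields another Clausius–Duhem pair, so by
uniqueness `k` is a multiple of `1/T`, contradicting `q k < 0 = q (1/T)`.
(ii) ⇒ (iv): `T a • δ_a - T b • δ_b` and its negative annihilate `1/T`.
(iv) ⇒ (iii): scaled Dirac masses are Carnot elements.
(iii) ⇒ (i): the Clausius–Duhem inequality forces every `1/T'` to annihilate the reversible cyclic
elements, hence to be constant on hotness levels; a Carnot element `(0, μ' - μ)` between the levels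
of `a` and `b` then fixes `T' a / T' b = μ' 1 / μ 1` for every scale `T'`.
-/

open Set

noncomputable section

/-- Signed regular Borel measures on `X`, modeled via the Riesz representation
theorem as the weak-star dual of `C(X, ℝ)`. -/
abbrev Meas (X : Type*) [TopologicalSpace X] := WeakDual ℝ C(X, ℝ)

/-- The ambient space containing `V(X) = M°(X) ⊕ M(X)`; membership in the
subspace `M°(X)` of the first component is expressed by `p.1 1 = 0`. -/
abbrev VSp (X : Type*) [TopologicalSpace X] := Meas X × Meas X

/-- The cone of nonnegative measures. -/
def PosMeas (X : Type*) [TopologicalSpace X] : Set (Meas X) :=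
  {μ | ∀ f : C(X, ℝ), (∀ x, 0 ≤ f x) → 0 ≤ μ f}

variable {X : Type*} [TopologicalSpace X]

/-- The Dirac measure at a point, i.e. the evaluation functional. -/
def dirac (x : X) : Meas X :=
  (⟨⟨⟨fun f => f x, fun _ _ => rfl⟩, fun _ _ => rfl⟩,
    continuous_eval_const x⟩ : C(X, ℝ) →L[ℝ] ℝ)

/-- The set of nonnegative multiples of members of `P`. -/
def coneOf (P : Set (VSp X)) : Set (VSp X) :=
  {x | ∃ c : ℝ, 0 ≤ c ∧ ∃ p ∈ P, x = c • p}

/-- `\hat P`, the weak-star closure of the cone generated by `P`. -/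
def hatP (P : Set (VSp X)) : Set (VSp X) :=
  closure (coneOf P)

/-- A thermodynamical theory: processes have change of condition with total mass
zero (i.e. `P ⊆ V(X)`), and `\hat P` is convex. -/
def IsThermoTheory (P : Set (VSp X)) : Prop :=
  (∀ p ∈ P, p.1 (1 : C(X, ℝ)) = 0) ∧ Convex ℝ (hatP P)

/-- A Kelvin–Planck theory: a thermodynamical theory with
`\hat P ∩ ({0} × M₊(X)) = {(0,0)}`. -/
def IsKelvinPlanck (P : Set (VSp X)) : Prop :=
  IsThermoTheory P ∧ hatP P ∩ (({0} : Set (Meas X)) ×ˢ PosMeas X) = {(0, 0)}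

/-- A Clausius–Duhem pair `(η, T)` for the theory `P`: `η` and `T` are continuous,
`T` is strictly positive, and for every continuous `β` equal pointwise to `1/T`
(such a `β` exists, and is unique, by positivity of `T`), the Clausius–Duhem
inequality `∫ η d(Δm) ≥ ∫ (1/T) dq` holds for every process in `P`. -/
def IsCDPair (P : Set (VSp X)) (η T : C(X, ℝ)) : Prop :=
  (∀ x, 0 < T x) ∧
    ∀ β : C(X, ℝ), (∀ x, β x = (T x)⁻¹) → ∀ p ∈ P, p.2 β ≤ p.1 η

/-- A Clausius–Duhem temperature scale. -/
def IsCDTemp (P : Set (VSp X)) (T : C(X, ℝ)) : Prop :=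
  ∃ η : C(X, ℝ), IsCDPair P η T

/-- Two states are of the same hotness: both `(0, δ_a − δ_b)` and `(0, δ_b − δ_a)`
belong to `\hat P`. -/
def SameHotness (P : Set (VSp X)) (a b : X) : Prop :=
  ((0 : Meas X), dirac a - dirac b) ∈ hatP P ∧
    ((0 : Meas X), dirac b - dirac a) ∈ hatP P

/-- The hotness level of a state. -/
def hotnessLevel (P : Set (VSp X)) (a : X) : Set X :=
  {b | SameHotness P a b}

/-- A subset of the state space that is a hotness level. -/
def IsHotnessLevel (P : Set (VSp X)) (h : Set X) : Prop :=
  ∃ a : X, h = hotnessLevel P a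

/-- The (signed) measure `μ` is supported in the set `A`: `μ` annihilates every
continuous function vanishing on `A`. -/
def SuppIn (μ : Meas X) (A : Set X) : Prop :=
  ∀ f : C(X, ℝ), (∀ x ∈ A, f x = 0) → μ f = 0

/-- `\hat Q` contains a passive heat transfer from hotness level `h` to `h'`:
an element `(0, μ − μ')` of `\hat Q` with `μ, μ'` nonnegative, `supp μ ⊆ h`,
`supp μ' ⊆ h'` and `μ(h) = μ'(h') > 0` (the common value being the total mass). -/
def IsPassiveHT (Q : Set (VSp X)) (h h' : Set X) : Prop :=
  ∃ μ μ' : Meas X, μ ∈ PosMeas X ∧ μ' ∈ PosMeas X ∧ SuppIn μ h ∧ SuppIn μ' h' ∧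
    μ (1 : C(X, ℝ)) = μ' (1 : C(X, ℝ)) ∧ 0 < μ (1 : C(X, ℝ)) ∧
    ((0 : Meas X), μ - μ') ∈ hatP Q

/-- Hotness level `h'` is hotter than `h`: the levels are distinct and every
thermodynamical theory whose closed process cone contains `P` together with a
passive heat transfer from `h` to `h'` fails to be a Kelvin–Planck theory. -/
def Hotter (P : Set (VSp X)) (h' h : Set X) : Prop :=
  h' ≠ h ∧ ∀ Pd : Set (VSp X), IsThermoTheory Pd → P ⊆ hatP Pd →
    IsPassiveHT Pd h h' → ¬ IsKelvinPlanck Pd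

/-- State `a` is hotter than state `b`. -/
def HotterState (P : Set (VSp X)) (a b : X) : Prop :=
  Hotter P (hotnessLevel P a) (hotnessLevel P b)

/-- A Carnot element of the theory `P` operating between hotness levels `h'` and
`h`: a reversible cyclic element `(0, μ' − μ)` with `μ', μ` nonzero nonnegative
measures supported in `h'`, `h` respectively. -/
def IsCarnotBetween (P : Set (VSp X)) (h' h : Set X) (p : VSp X) : Prop :=
  p ∈ hatP P ∧ -p ∈ hatP P ∧
    ∃ μ' μ : Meas X, μ' ∈ PosMeas X ∧ μ ∈ PosMeas X ∧ μ' ≠ 0 ∧ μ ≠ 0 ∧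
      SuppIn μ' h' ∧ SuppIn μ h ∧ p = ((0 : Meas X), μ' - μ)

end

namespace WeakDual

section Apply

variable {𝕜 E : Type*} [CommRing 𝕜] [TopologicalSpace 𝕜] [IsTopologicalAddGroup 𝕜]
  [ContinuousConstSMul 𝕜 𝕜] [AddCommGroup E] [Module 𝕜 E] [TopologicalSpace E]

@[simp] lemma zero_apply (y : E) : (0 : WeakDual 𝕜 E) y = 0 := rfl

@[simp] lemma neg_apply (μ : WeakDual 𝕜 E) (y : E) : (-μ) y = -μ y := rfl

@[simp] lemma sub_apply (μ ν : WeakDual 𝕜 E) (y : E) : (μ - ν) y = μ y - ν y := rfl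

@[simp] lemma smul_apply (c : 𝕜) (μ : WeakDual 𝕜 E) (y : E) : (c • μ) y = c * μ y := rfl

end Apply

instance {E : Type*} [AddCommGroup E] [Module ℝ E] [TopologicalSpace E] :
    LocallyConvexSpace ℝ (WeakDual ℝ E) :=
  WeakBilin.locallyConvexSpace

theorem exists_forall_eq_apply {𝕜 E : Type*} [NontriviallyNormedField 𝕜] [AddCommGroup E]
    [Module 𝕜 E] [TopologicalSpace E] (φ : StrongDual 𝕜 (WeakDual 𝕜 E)) :
    ∃ y : E, ∀ μ : WeakDual 𝕜 E, φ μ = μ y := by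
  obtain ⟨y, rfl⟩ := LinearMap.dualEmbedding_surjective (topDualPairing 𝕜 E) φ
  exact ⟨y, fun μ => rfl⟩

end WeakDual

section ThermodynamicalTheory

variable {X : Type*} [TopologicalSpace X]

theorem ContinuousMap.exists_forall_apply_eq_inv (f : C(X, ℝ)) (hf : ∀ x, f x ≠ 0) :
    ∃ g : C(X, ℝ), ∀ x, g x = (f x)⁻¹ :=
  ⟨⟨fun x => (f x)⁻¹, f.continuous.inv₀ hf⟩, fun _ => rfl⟩

theorem ContinuousMap.exists_pos_forall_pos_sub_smul [CompactSpace X] {β : C(X, ℝ)}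
    (hβ : ∀ x, 0 < β x) (k : C(X, ℝ)) : ∃ ε : ℝ, 0 < ε ∧ ∀ x, 0 < β x - ε * k x := by
  have hnear : ∀ᶠ ε in nhds (0 : ℝ), ∀ x ∈ univ, 0 < β x - ε * k x :=
    isCompact_univ.eventually_forall_of_forall_eventually fun x _ =>
      ((β.continuous.comp continuous_snd).sub
        (continuous_fst.mul (k.continuous.comp continuous_snd))).continuousAt.eventually
        (lt_mem_nhds (by simpa using hβ x))
  obtain ⟨ε, hε, hεpos⟩ := hnear.exists_gt
  exact ⟨ε, hε, fun x => hεpos x (mem_univ x)⟩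

theorem VSp.exists_forall_eq_apply (φ : StrongDual ℝ (VSp X)) :
    ∃ g k : C(X, ℝ), ∀ p : VSp X, φ p = p.1 g + p.2 k := by
  obtain ⟨g, hg⟩ := WeakDual.exists_forall_eq_apply (φ.comp (.inl ℝ (Meas X) (Meas X)))
  obtain ⟨k, hk⟩ := WeakDual.exists_forall_eq_apply (φ.comp (.inr ℝ (Meas X) (Meas X)))
  exact ⟨g, k, fun p => by rw [← φ.comp_inl_add_comp_inr, hg, hk]⟩

@[simp] lemma dirac_apply (a : X) (f : C(X, ℝ)) : dirac a f = f a := rfl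

lemma smul_dirac_mem_posMeas {c : ℝ} (hc : 0 ≤ c) (a : X) : c • dirac a ∈ PosMeas X :=
  fun f hf => by simpa using mul_nonneg hc (hf a)

lemma smul_dirac_ne_zero {c : ℝ} (hc : c ≠ 0) (a : X) : c • dirac a ≠ 0 := fun h => by
  simpa [hc] using congrArg (fun μ : Meas X => μ 1) h

lemma suppIn_smul_dirac (c : ℝ) {a : X} {A : Set X} (ha : a ∈ A) : SuppIn (c • dirac a) A :=
  fun f hf => by simp [hf a ha]

lemma SuppIn.apply_eq_mul_apply_one {μ : Meas X} {A : Set X} (hμ : SuppIn μ A) {f : C(X, ℝ)}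
    {c : ℝ} (hf : ∀ x ∈ A, f x = c) : μ f = c * μ 1 := by
  have := hμ (f - c • 1) fun x hx => by simp [hf x hx]
  rw [map_sub, map_smul, smul_eq_mul, sub_eq_zero] at this
  exact this

lemma apply_le_norm_mul_apply_one [CompactSpace X] {μ : Meas X} (hμ : μ ∈ PosMeas X)
    (f : C(X, ℝ)) : μ f ≤ ‖f‖ * μ 1 := by
  have := hμ (‖f‖ • 1 - f) fun x => by
    simpa using (le_abs_self (f x)).trans (f.norm_coe_le_norm x)
  rw [map_sub, map_smul, smul_eq_mul, sub_nonneg] at this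
  exact this

lemma apply_one_pos_of_mem_posMeas [CompactSpace X] {μ : Meas X} (hμ : μ ∈ PosMeas X)
    (hne : μ ≠ 0) : 0 < μ 1 := by
  refine (hμ 1 fun _ => zero_le_one).lt_of_ne fun h => hne (DFunLike.ext _ _ fun f => ?_)
  have h₁ := apply_le_norm_mul_apply_one hμ f
  have h₂ := apply_le_norm_mul_apply_one hμ (-f)
  rw [← h, mul_zero] at h₁ h₂
  rw [map_neg] at h₂
  simp only [WeakDual.zero_apply]
  linarith

lemma subset_hatP (P : Set (VSp X)) : P ⊆ hatP P := fun p hp =>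
  subset_closure ⟨1, zero_le_one, p, hp, (one_smul _ _).symm⟩

variable {P : Set (VSp X)}

lemma smul_mem_hatP {c : ℝ} (hc : 0 ≤ c) {p : VSp X} (hp : p ∈ hatP P) : c • p ∈ hatP P := by
  refine map_mem_closure (continuous_const_smul c) hp ?_
  rintro _ ⟨c₁, hc₁, p₁, hp₁, rfl⟩
  exact ⟨c * c₁, mul_nonneg hc hc₁, p₁, hp₁, smul_smul c c₁ p₁⟩

lemma hatP_subset_of_isClosed {S : Set (VSp X)} (hS : IsClosed S)
    (hP : ∀ c : ℝ, 0 ≤ c → ∀ p ∈ P, c • p ∈ S) : hatP P ⊆ S :=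
  closure_minimal (by rintro _ ⟨c, hc, p, hp, rfl⟩; exact hP c hc p hp) hS

namespace IsKelvinPlanck

variable (hP : IsKelvinPlanck P)
include hP

lemma zero_mem_hatP : (0 : VSp X) ∈ hatP P :=
  (hP.2.symm.subset rfl).1

lemma mem_hotnessLevel_self (a : X) : a ∈ hotnessLevel P a := by
  constructor <;> simpa only [sub_self, Prod.mk_zero_zero] using hP.zero_mem_hatP

def hatPCone : ProperCone ℝ (VSp X) where
  carrier := hatP P
  add_mem' {x y} hx hy := by
    have hmid := hP.1.2 hx hy (by norm_num : (0 : ℝ) ≤ 1 / 2) (by norm_num : (0 : ℝ) ≤ 1 / 2)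
      (by norm_num)
    simpa [← smul_add, smul_smul] using smul_mem_hatP zero_le_two hmid
  zero_mem' := hP.zero_mem_hatP
  smul_mem' c x hx := smul_mem_hatP c.2 hx
  isClosed' := isClosed_closure

lemma exists_separating {x : VSp X} (hx : x ∉ hatP P) :
    ∃ g k : C(X, ℝ), (∀ p ∈ hatP P, 0 ≤ p.1 g + p.2 k) ∧ x.1 g + x.2 k < 0 := by
  obtain ⟨f, hf, hfx⟩ := hP.hatPCone.hyperplane_separation_point hx
  obtain ⟨g, k, hgk⟩ := VSp.exists_forall_eq_apply f
  exact ⟨g, k, fun p hp => hgk p ▸ hf p hp, hgk x ▸ hfx⟩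

end IsKelvinPlanck

variable {η T β : C(X, ℝ)}

lemma isCDPair_of_forall_le (hβ : ∀ x, 0 < β x) (hT : ∀ x, T x = (β x)⁻¹)
    (h : ∀ p ∈ P, p.2 β ≤ p.1 η) : IsCDPair P η T := by
  refine ⟨fun x => hT x ▸ inv_pos.2 (hβ x), fun β' hβ' => ?_⟩
  obtain rfl : β' = β := ContinuousMap.ext fun x => by rw [hβ', hT, inv_inv]
  exact h

namespace IsCDPair

variable (hpair : IsCDPair P η T)
include hpair

lemma exists_inv : ∃ β : C(X, ℝ), ∀ x, β x = (T x)⁻¹ :=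
  T.exists_forall_apply_eq_inv fun x => (hpair.1 x).ne'

variable (hβ : ∀ x, β x = (T x)⁻¹)
include hβ

lemma le_of_mem_hatP {p : VSp X} (hp : p ∈ hatP P) : p.2 β ≤ p.1 η := by
  refine hatP_subset_of_isClosed (S := {p | p.2 β ≤ p.1 η}) ?_ (fun c hc p hp => ?_) hp
  · exact isClosed_le ((WeakDual.eval_continuous β).comp continuous_snd)
      ((WeakDual.eval_continuous η).comp continuous_fst)
  · simpa using mul_le_mul_of_nonneg_left (hpair.2 β hβ p hp) hc

lemma apply_eq_zero_of_reversible {q : Meas X} (hq : ((0 : Meas X), q) ∈ hatP P)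
    (hq' : -((0 : Meas X), q) ∈ hatP P) : q β = 0 := by
  have h₁ := hpair.le_of_mem_hatP hβ hq
  have h₂ := hpair.le_of_mem_hatP hβ hq'
  simp only [Prod.snd_neg, Prod.fst_neg, neg_zero, WeakDual.zero_apply,
    WeakDual.neg_apply] at h₁ h₂
  linarith

lemma apply_eq_of_sameHotness {a x : X} (hx : SameHotness P a x) : β x = β a := by
  have h := hpair.apply_eq_zero_of_reversible hβ hx.1 (by simpa using hx.2)
  simp only [WeakDual.sub_apply, dirac_apply] at h
  linarith

end IsCDPair

lemma IsCDPair.carnot_ratio (hpair : IsCDPair P η T) {a b : X} {μ' μ : Meas X}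
    (hrev : ((0 : Meas X), μ' - μ) ∈ hatP P) (hrev' : -((0 : Meas X), μ' - μ) ∈ hatP P)
    (ha : SuppIn μ' (hotnessLevel P a)) (hb : SuppIn μ (hotnessLevel P b)) :
    μ' 1 * T b = μ 1 * T a := by
  obtain ⟨β, hβ⟩ := hpair.exists_inv
  have h := hpair.apply_eq_zero_of_reversible hβ hrev hrev'
  rw [WeakDual.sub_apply,
    ha.apply_eq_mul_apply_one fun x hx => hpair.apply_eq_of_sameHotness hβ hx,
    hb.apply_eq_mul_apply_one fun x hx => hpair.apply_eq_of_sameHotness hβ hx, hβ, hβ] at h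
  have := (hpair.1 a).ne'
  have := (hpair.1 b).ne'
  field_simp at h
  linarith

lemma IsCDPair.mul_eq_mul_of_isCarnotBetween [CompactSpace X] {η' T' : C(X, ℝ)}
    (hpair : IsCDPair P η T) (hpair' : IsCDPair P η' T') {a b : X} {p : VSp X}
    (hp : IsCarnotBetween P (hotnessLevel P a) (hotnessLevel P b) p) :
    T' a * T b = T a * T' b := by
  obtain ⟨hrev, hrev', μ', μ, hμ', -, hμ'0, -, ha, hb, rfl⟩ := hp
  have e := hpair.carnot_ratio hrev hrev' ha hb
  have e' := hpair'.carnot_ratio hrev hrev' ha hb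
  exact mul_left_cancel₀ (apply_one_pos_of_mem_posMeas hμ' hμ'0).ne'
    (by linear_combination T' a * e - T a * e')

lemma cyclic_mem_hatP_of_eq_smul [CompactSpace X] (hP : IsKelvinPlanck P)
    (hpair : IsCDPair P η T) (hβ : ∀ x, β x = (T x)⁻¹)
    (huniq : ∀ T' : C(X, ℝ), IsCDTemp P T' → ∃ α : ℝ, 0 < α ∧ T' = α • T) :
    ∀ q : Meas X, q β = 0 → ((0 : Meas X), q) ∈ hatP P := by
  intro q hq
  by_contra hq'
  obtain ⟨g, k, hgk, hqk⟩ := hP.exists_separating hq'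
  simp only [WeakDual.zero_apply, zero_add] at hqk
  have hβpos : ∀ x, 0 < β x := fun x => hβ x ▸ inv_pos.2 (hpair.1 x)
  obtain ⟨ε, hε, hεpos⟩ := β.exists_pos_forall_pos_sub_smul hβpos k
  obtain ⟨T', hT'⟩ := (β - ε • k).exists_forall_apply_eq_inv fun x => by simpa using (hεpos x).ne'
  have hpair' : IsCDPair P (η + ε • g) T' := by
    refine isCDPair_of_forall_le (fun x => by simpa using hεpos x) hT' fun p hp => ?_
    have hcd := hpair.2 β hβ p hp
    have hsep := mul_nonneg hε.le (hgk p (subset_hatP P hp))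
    simp only [map_sub, map_add, map_smul, smul_eq_mul]
    linarith
  obtain ⟨α, hα, rfl⟩ := huniq T' ⟨_, hpair'⟩
  have hk : ε • k = (1 - α⁻¹) • β := ContinuousMap.ext fun x => by
    have h : β x - ε * k x = α⁻¹ * β x := calc
      β x - ε * k x = (β - ε • k) x := by simp
      _ = ((α • T) x)⁻¹ := by rw [hT', inv_inv]
      _ = α⁻¹ * β x := by simp [hβ, mul_comm]
    simp only [ContinuousMap.smul_apply, smul_eq_mul]
    linarith
  have := congrArg q hk
  simp only [map_smul, smul_eq_mul, hq, mul_zero] at this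
  exact (mul_neg_of_pos_of_neg hε hqk).ne this

lemma reversible_dirac_of_cyclic_mem_hatP (hT : ∀ x, 0 < T x)
    (hβ : ∀ x, β x = (T x)⁻¹)
    (hcyc : ∀ q : Meas X, q β = 0 → ((0 : Meas X), q) ∈ hatP P) (a b : X) :
    ∃ c' c : ℝ, 0 < c' ∧ 0 < c ∧ c' / c = T a / T b ∧
      ((0 : Meas X), c' • dirac a - c • dirac b) ∈ hatP P ∧
      -(((0 : Meas X), c' • dirac a - c • dirac b) : VSp X) ∈ hatP P := by
  have hq : (T a • dirac a - T b • dirac b) β = 0 := by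
    simp [hβ, (hT a).ne', (hT b).ne']
  refine ⟨T a, T b, hT a, hT b, rfl, hcyc _ hq, ?_⟩
  simpa using hcyc (-(T a • dirac a - T b • dirac b)) (by rw [WeakDual.neg_apply, hq, neg_zero])

lemma isCarnotBetween_of_reversible_dirac (hP : IsKelvinPlanck P) {a b : X} {c' c : ℝ}
    (hc' : 0 < c') (hc : 0 < c)
    (hrev : ((0 : Meas X), c' • dirac a - c • dirac b) ∈ hatP P)
    (hrev' : -(((0 : Meas X), c' • dirac a - c • dirac b) : VSp X) ∈ hatP P) :
    IsCarnotBetween P (hotnessLevel P a) (hotnessLevel P b)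
      ((0 : Meas X), c' • dirac a - c • dirac b) :=
  ⟨hrev, hrev', _, _, smul_dirac_mem_posMeas hc'.le a, smul_dirac_mem_posMeas hc.le b,
    smul_dirac_ne_zero hc'.ne' a, smul_dirac_ne_zero hc.ne' b,
    suppIn_smul_dirac c' (hP.mem_hotnessLevel_self a),
    suppIn_smul_dirac c (hP.mem_hotnessLevel_self b), rfl⟩

lemma eq_smul_of_forall_isCarnotBetween [CompactSpace X] (hpair : IsCDPair P η T)
    (hcarnot : ∀ a b : X, ∃ p : VSp X,
      IsCarnotBetween P (hotnessLevel P a) (hotnessLevel P b) p) :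
    ∀ T' : C(X, ℝ), IsCDTemp P T' → ∃ α : ℝ, 0 < α ∧ T' = α • T := by
  rintro T' ⟨η', hpair'⟩
  cases isEmpty_or_nonempty X with
  | inl => exact ⟨1, one_pos, ContinuousMap.ext isEmptyElim⟩
  | inr hX =>
    obtain ⟨b⟩ := hX
    refine ⟨T' b / T b, div_pos (hpair'.1 b) (hpair.1 b), ContinuousMap.ext fun a => ?_⟩
    obtain ⟨p, hp⟩ := hcarnot a b
    have := hpair.mul_eq_mul_of_isCarnotBetween hpair' hp
    rw [ContinuousMap.smul_apply, smul_eq_mul, div_mul_eq_mul_div,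
      eq_div_iff (hpair.1 b).ne']
    linarith

end ThermodynamicalTheory

theorem temperature_scale_uniqueness_tfae_general
    {X : Type*} [TopologicalSpace X] [CompactSpace X]
    (P : Set (VSp X)) (hP : IsKelvinPlanck P)
    (η T β : C(X, ℝ)) (hpair : IsCDPair P η T) (hβ : ∀ x, β x = (T x)⁻¹) :
    ((∀ T' : C(X, ℝ), IsCDTemp P T' → ∃ α : ℝ, 0 < α ∧ T' = α • T) ↔
      (∀ q : Meas X, q β = 0 → ((0 : Meas X), q) ∈ hatP P)) ∧
    ((∀ T' : C(X, ℝ), IsCDTemp P T' → ∃ α : ℝ, 0 < α ∧ T' = α • T) ↔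
      (∀ a b : X, ∃ p : VSp X,
        IsCarnotBetween P (hotnessLevel P a) (hotnessLevel P b) p)) ∧
    ((∀ T' : C(X, ℝ), IsCDTemp P T' → ∃ α : ℝ, 0 < α ∧ T' = α • T) ↔
      (∀ a b : X, ∃ c' c : ℝ, 0 < c' ∧ 0 < c ∧ c' / c = T a / T b ∧
        ((0 : Meas X), c' • dirac a - c • dirac b) ∈ hatP P ∧
        -(((0 : Meas X), c' • dirac a - c • dirac b) : VSp X) ∈ hatP P)) := by
  have h12 := cyclic_mem_hatP_of_eq_smul hP hpair hβ
  have h24 := reversible_dirac_of_cyclic_mem_hatP (P := P) hpair.1 hβ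
  have h43 := fun (hrev : ∀ a b : X, ∃ c' c : ℝ, 0 < c' ∧ 0 < c ∧ c' / c = T a / T b ∧
      ((0 : Meas X), c' • dirac a - c • dirac b) ∈ hatP P ∧
      -(((0 : Meas X), c' • dirac a - c • dirac b) : VSp X) ∈ hatP P) (a b : X) =>
    let ⟨_, _, hc', hc, _, hmem, hmem'⟩ := hrev a b
    Exists.intro _ (isCarnotBetween_of_reversible_dirac hP hc' hc hmem hmem')
  have h31 := eq_smul_of_forall_isCarnotBetween hpair
  exact ⟨⟨h12, h31 ∘ h43 ∘ h24⟩, ⟨h43 ∘ h24 ∘ h12, h31⟩, ⟨h24 ∘ h12, h31 ∘ h43⟩⟩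

/-- **Theorem (Essential Uniqueness of a Thermodynamic Temperature Scale).**
Let `(X, P)` be a Kelvin–Planck theory and `T` a Clausius–Duhem temperature scale
(with entropy partner `η`, and `β = 1/T`).  The following are equivalent:
(i) every Clausius–Duhem temperature scale is a positive multiple of `T`;
(ii) every `q ∈ M(X)` with `∫ (1/T) dq = 0` has `(0, q) ∈ \hat P`;
(iii) between any two hotness levels there is a Carnot element;
(iv) between any two states `a`, `b` there is a Carnot element
`(0, c'·δ_a − c·δ_b)` with `c'/c = T a / T b`. -/
theorem temperature_scale_uniqueness_tfae
    {X : Type*} [TopologicalSpace X] [CompactSpace X] [T2Space X]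
    (P : Set (VSp X)) (hP : IsKelvinPlanck P)
    (η T β : C(X, ℝ)) (hpair : IsCDPair P η T) (hβ : ∀ x, β x = (T x)⁻¹) :
    ((∀ T' : C(X, ℝ), IsCDTemp P T' → ∃ α : ℝ, 0 < α ∧ T' = α • T) ↔
      (∀ q : Meas X, q β = 0 → ((0 : Meas X), q) ∈ hatP P)) ∧
    ((∀ T' : C(X, ℝ), IsCDTemp P T' → ∃ α : ℝ, 0 < α ∧ T' = α • T) ↔
      (∀ a b : X, ∃ p : VSp X,
        IsCarnotBetween P (hotnessLevel P a) (hotnessLevel P b) p)) ∧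
    ((∀ T' : C(X, ℝ), IsCDTemp P T' → ∃ α : ℝ, 0 < α ∧ T' = α • T) ↔
      (∀ a b : X, ∃ c' c : ℝ, 0 < c' ∧ 0 < c ∧ c' / c = T a / T b ∧
        ((0 : Meas X), c' • dirac a - c • dirac b) ∈ hatP P ∧
        -(((0 : Meas X), c' • dirac a - c • dirac b) : VSp X) ∈ hatP P)) :=
  temperature_scale_uniqueness_tfae_general P hP η T β hpair hβ
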